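/- The number of standard partitions (I, Ī) of [2n] into two complementary parts with both |I| and |Ī| even equals C(2n−1, n); equivalently, the number of standard Young tableaux with 2n cells, at most two rows, and each row of even length equals C(2n−1, n). -/

import Mathlib

/-
`I` is standard iff it satisfies the ballot condition: every initial segment `[1, t]` contains
at least as many elements of `I` as of its complement. Sorting the ballot subsets of `[m + 1]`
by whether they contain `m + 1` shows that, for `m ≤ 2a`, the number of ballot subsets of size
`a` obeys Pascal's rule and hence equals `C(m, a) - C(m, a + 1)`. Summing over
even `a ≥ n`, Pascal's rule in `[2n - 1]` turns `C(2n, a) - C(2n, a + 1)` into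
`C(2n - 1, a - 1) - C(2n - 1, a + 1)`, so the sum telescopes to `C(2n - 1, n)`.
-/

open scoped Classical
noncomputable section

/-- `(I, Ī)` (with `Ī = [2n] ∖ I`) is a standard partition of `[2n]`: writing
`I = {i_1 < … < i_a}` and `Ī = {j_1 < … < j_b}`, we have `a ≥ b` and `i_k < j_k` for all
`1 ≤ k ≤ b`.  Such partitions correspond to standard Young tableaux of size `2n` with at
most two rows (first row `I`, second row `Ī`). -/
def IsStandardPart (n : ℕ) (I : Finset ℕ) : Prop :=
  I ⊆ Finset.Icc 1 (2 * n) ∧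
  (Finset.Icc 1 (2 * n) \ I).card ≤ I.card ∧
  ∀ k < (Finset.Icc 1 (2 * n) \ I).card,
    (I.sort (· ≤ ·)).getD k 0 < ((Finset.Icc 1 (2 * n) \ I).sort (· ≤ ·)).getD k 0

open Finset

namespace Finset

variable {α : Type*} [LinearOrder α]

theorem card_filter_lt_getElem_sort (s : Finset α) {k : ℕ} (hk : k < s.sort.length) :
    #{x ∈ s | x < s.sort[k]} = k := by
  have hsorted := s.sortedLT_sort
  have : {x ∈ s | x < s.sort[k]} = ((s.sort).take k).toFinset := by
    ext x
    rw [mem_filter, List.mem_toFinset, List.mem_take_iff_getElem, ← mem_sort (· ≤ ·),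
      List.mem_iff_getElem]
    constructor
    · rintro ⟨⟨i, hi, rfl⟩, hlt⟩
      exact ⟨i, lt_min (hsorted.getElem_lt_getElem_iff.1 hlt) hi, rfl⟩
    · rintro ⟨i, hi, rfl⟩
      exact ⟨⟨i, _, rfl⟩, hsorted.getElem_lt_getElem_iff.2 (lt_min_iff.1 hi).1⟩
  rw [this, List.toFinset_card_of_nodup (hsorted.nodup.sublist (List.take_sublist _ _)),
    List.length_take, min_eq_left hk.le]

theorem getElem_sort_le_iff (s : Finset α) {k : ℕ} (hk : k < s.sort.length) (b : α) :
    s.sort[k] ≤ b ↔ k < #{x ∈ s | x ≤ b} := by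
  have hmem : s.sort[k] ∈ s := (mem_sort _).1 (List.getElem_mem hk)
  constructor
  · intro hb
    calc k < #{x ∈ s | x < s.sort[k]} + 1 := by rw [card_filter_lt_getElem_sort]; omega
      _ = #(insert s.sort[k] {x ∈ s | x < s.sort[k]}) := by
        rw [card_insert_of_notMem (by simp)]
      _ ≤ #{x ∈ s | x ≤ b} := card_le_card <| insert_subset (mem_filter.2 ⟨hmem, hb⟩)
        fun x hx => mem_filter.2 ⟨(mem_filter.1 hx).1, ((mem_filter.1 hx).2.trans_le hb).le⟩
  · intro hk'
    by_contra! hb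
    have : #{x ∈ s | x ≤ b} ≤ #{x ∈ s | x < s.sort[k]} :=
      card_le_card (monotone_filter_right s fun _ _ hx => hx.trans_lt hb)
    rw [card_filter_lt_getElem_sort] at this
    omega

theorem getD_sort_lt_getD_sort_iff {A B : Finset α} (hAB : Disjoint A B) (hcard : #B ≤ #A)
    (d : α) :
    (∀ k < #B, A.sort.getD k d < B.sort.getD k d) ↔
      ∀ t, #{x ∈ B | x ≤ t} ≤ #{x ∈ A | x ≤ t} := by
  have hA : ∀ k < #A, k < A.sort.length := fun k hk => by rwa [length_sort]
  have hB : ∀ k < #B, k < B.sort.length := fun k hk => by rwa [length_sort]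
  constructor
  · intro h t
    obtain hc | hc := Nat.eq_zero_or_pos #{x ∈ B | x ≤ t}
    · omega
    set c := #{x ∈ B | x ≤ t} - 1
    have hcB : c < #B := by have := card_filter_le B (· ≤ t); omega
    have hBt : B.sort[c]'(hB c hcB) ≤ t := (getElem_sort_le_iff B _ t).2 (by omega)
    have hAt : A.sort[c]'(hA c (hcB.trans_le hcard)) ≤ t := by
      have := h c hcB
      rw [List.getD_eq_getElem _ _ (hA c (hcB.trans_le hcard)),
        List.getD_eq_getElem _ _ (hB c hcB)] at this
      exact this.le.trans hBt
    have := (getElem_sort_le_iff A _ t).1 hAt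
    omega
  · intro h k hk
    set b := B.sort[k]'(hB k hk)
    have hkA : k < #{x ∈ A | x ≤ b} := ((getElem_sort_le_iff B _ b).1 le_rfl).trans_le (h b)
    have hkA' : k < A.sort.length := hA k (hkA.trans_le (card_filter_le _ _))
    rw [List.getD_eq_getElem _ _ hkA', List.getD_eq_getElem _ _ (hB k hk)]
    refine lt_of_le_of_ne ((getElem_sort_le_iff A hkA' b).2 hkA) fun heq => ?_
    exact disjoint_left.1 hAB ((mem_sort _).1 (List.getElem_mem hkA'))
      (heq ▸ (mem_sort _).1 (List.getElem_mem (hB k hk)))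

end Finset

def IsBallot (m : ℕ) (I : Finset ℕ) : Prop :=
  ∀ t ≤ m, #(Icc 1 t \ I) ≤ #(Icc 1 t ∩ I)

theorem isBallot_iff_forall_card_filter_le {m : ℕ} {I : Finset ℕ} (hI : I ⊆ Icc 1 m) :
    (∀ t, #{x ∈ Icc 1 m \ I | x ≤ t} ≤ #{x ∈ I | x ≤ t}) ↔ IsBallot m I := by
  have hcompl : ∀ t, {x ∈ Icc 1 m \ I | x ≤ t} = Icc 1 (min t m) \ I := fun t => by
    ext x; simp only [mem_filter, mem_sdiff, mem_Icc, le_min_iff]; tauto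
  have hinter : ∀ t, {x ∈ I | x ≤ t} = Icc 1 (min t m) ∩ I := fun t => by
    ext x
    have := @hI x
    simp only [mem_filter, mem_inter, mem_Icc] at this ⊢
    constructor
    · rintro ⟨hx, hxt⟩; have := this hx; exact ⟨by omega, hx⟩
    · rintro ⟨hx, hxI⟩; exact ⟨hxI, by omega⟩
  simp only [hcompl, hinter]
  exact ⟨fun h t ht => min_eq_left ht ▸ h t, fun h t => h _ (min_le_right t m)⟩

theorem isStandardPart_iff {n : ℕ} {I : Finset ℕ} :
    IsStandardPart n I ↔ I ⊆ Icc 1 (2 * n) ∧ IsBallot (2 * n) I := by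
  refine ⟨fun ⟨hsub, hcard, hlt⟩ => ⟨hsub, ?_⟩, fun ⟨hsub, hball⟩ => ⟨hsub, ?_⟩⟩
  · exact (isBallot_iff_forall_card_filter_le hsub).1
      ((getD_sort_lt_getD_sort_iff disjoint_sdiff hcard 0).1 hlt)
  · have hcard : #(Icc 1 (2 * n) \ I) ≤ #I := by
      simpa only [inter_eq_right.2 hsub] using hball _ le_rfl
    exact ⟨hcard, (getD_sort_lt_getD_sort_iff disjoint_sdiff hcard 0).2
      ((isBallot_iff_forall_card_filter_le hsub).2 hball)⟩

theorem card_sdiff_le_card_inter_iff {m : ℕ} {I : Finset ℕ} (hI : I ⊆ Icc 1 m) :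
    #(Icc 1 m \ I) ≤ #(Icc 1 m ∩ I) ↔ m ≤ 2 * #I := by
  have hle : #I ≤ m := by simpa using card_le_card hI
  rw [inter_eq_right.2 hI, card_sdiff_of_subset hI, Nat.card_Icc]
  omega

theorem isBallot_succ {m : ℕ} {I : Finset ℕ} :
    IsBallot (m + 1) I ↔ IsBallot m I ∧ #(Icc 1 (m + 1) \ I) ≤ #(Icc 1 (m + 1) ∩ I) := by
  refine ⟨fun h => ⟨fun t ht => h t (Nat.le_succ_of_le ht), h _ le_rfl⟩,
    fun ⟨h, hlast⟩ t ht => ?_⟩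
  obtain ht | rfl := Nat.le_succ_iff.1 ht
  exacts [h t ht, hlast]

theorem isBallot_insert_succ {m : ℕ} {J : Finset ℕ} :
    IsBallot m (insert (m + 1) J) ↔ IsBallot m J := by
  refine forall₂_congr fun t ht => ?_
  have : m + 1 ∉ Icc 1 t := by rw [mem_Icc]; omega
  rw [sdiff_insert_of_notMem this, inter_insert_of_notMem this]

theorem IsBallot.le_two_mul_card {m : ℕ} {I : Finset ℕ} (hI : I ⊆ Icc 1 m)
    (h : IsBallot m I) : m ≤ 2 * #I :=
  (card_sdiff_le_card_inter_iff hI).1 (h m le_rfl)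

def ballotSets (m a : ℕ) : Finset (Finset ℕ) :=
  {I ∈ (Icc 1 m).powersetCard a | IsBallot m I}

theorem mem_ballotSets {m a : ℕ} {I : Finset ℕ} :
    I ∈ ballotSets m a ↔ I ⊆ Icc 1 m ∧ #I = a ∧ IsBallot m I := by
  rw [ballotSets, mem_filter, mem_powersetCard, and_assoc]

theorem ballotSets_eq_empty {m a : ℕ} (h : 2 * a < m) : ballotSets m a = ∅ := by
  refine eq_empty_of_forall_notMem fun I hI => ?_
  obtain ⟨hsub, rfl, hball⟩ := mem_ballotSets.1 hI
  exact absurd (hball.le_two_mul_card hsub) (not_le.2 h)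

theorem card_ballotSets_succ_succ {m a : ℕ} (h : m ≤ 2 * a + 1) :
    #(ballotSets (m + 1) (a + 1)) = #(ballotSets m a) + #(ballotSets m (a + 1)) := by
  have hfree : ∀ k, ∀ J ∈ (Icc 1 m).powersetCard k, m + 1 ∉ J := fun k J hJ hmem => by
    have := mem_Icc.1 ((mem_powersetCard.1 hJ).1 hmem); omega
  have hlast :
      ∀ I ∈ (Icc 1 (m + 1)).powersetCard (a + 1), IsBallot (m + 1) I ↔ IsBallot m I := by
    intro I hI
    rw [mem_powersetCard] at hI
    rw [isBallot_succ, card_sdiff_le_card_inter_iff hI.1, hI.2, and_iff_left (by omega)]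
  rw [ballotSets, filter_congr hlast, ← insert_Icc_right_eq_Icc_add_one (by omega),
    powersetCard_succ_insert (by simp), filter_union, filter_image]
  simp only [isBallot_insert_succ]
  rw [card_union_of_disjoint, card_image_of_injOn, add_comm]
  · rfl
  · intro J hJ K hK heq
    rw [← erase_insert (hfree a J (mem_filter.1 hJ).1), heq,
      erase_insert (hfree a K (mem_filter.1 hK).1)]
  · refine disjoint_left.2 fun I hI hI' => ?_
    obtain ⟨J, -, rfl⟩ := mem_image.1 hI'
    exact hfree _ _ (mem_filter.1 hI).1 (mem_insert_self _ _)

def ballotNumber (m a : ℕ) : ℤ :=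
  if m ≤ 2 * a then m.choose a - m.choose (a + 1) else 0

theorem ballotNumber_succ_succ {m a : ℕ} (h : m ≤ 2 * a + 1) :
    ballotNumber (m + 1) (a + 1) = ballotNumber m a + ballotNumber m (a + 1) := by
  simp only [ballotNumber, Nat.choose_succ_succ', if_pos (show m + 1 ≤ 2 * (a + 1) by omega),
    if_pos (show m ≤ 2 * (a + 1) by omega)]
  push_cast
  split_ifs with ha
  · ring
  · obtain rfl : m = 2 * a + 1 := by omega
    rw [Nat.choose_symm_half]
    ring

theorem card_ballotSets (m a : ℕ) : (#(ballotSets m a) : ℤ) = ballotNumber m a := by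
  induction m generalizing a with
  | zero =>
    cases a <;> simp [ballotSets, ballotNumber, IsBallot]
  | succ m ih =>
    by_cases h : m + 1 ≤ 2 * a
    · obtain ⟨a, rfl⟩ : ∃ a', a = a' + 1 := ⟨a - 1, by omega⟩
      rw [card_ballotSets_succ_succ (by omega), ballotNumber_succ_succ (by omega)]
      push_cast
      rw [ih, ih]
    · rw [ballotSets_eq_empty (by omega), ballotNumber, if_neg h, card_empty, Nat.cast_zero]

theorem sum_ballotNumber_two_mul {n : ℕ} (hn : 1 ≤ n) :
    ∑ i ∈ range (n + 1), ballotNumber (2 * n) (2 * i) = (2 * n - 1).choose n := by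
  obtain ⟨k, rfl⟩ : ∃ k, n = k + 1 := ⟨n - 1, by omega⟩
  set f : ℕ → ℤ := fun i => (2 * k + 1).choose (2 * i + 1)
  have hterm : ∀ i ∈ range (k + 1),
      ballotNumber (2 * (k + 1)) (2 * (i + 1)) = if k / 2 ≤ i then f i - f (i + 1) else 0 := by
    intro i _
    rw [ballotNumber, show 2 * (k + 1) = 2 * k + 1 + 1 by ring,
      show 2 * (i + 1) = 2 * i + 1 + 1 by ring, Nat.choose_succ_succ' _ (2 * i + 1),
      Nat.choose_succ_succ' _ (2 * i + 1 + 1)]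
    simp only [f, show 2 * (i + 1) + 1 = 2 * i + 1 + 1 + 1 by ring]
    split_ifs <;> omega
  have hfilter : {i ∈ range (k + 1) | k / 2 ≤ i} = Ico (k / 2) (k + 1) := by
    ext i; simp only [mem_filter, mem_range, mem_Ico]; omega
  have htelescope : ∑ i ∈ Ico (k / 2) (k + 1), (f i - f (i + 1)) = f (k / 2) - f (k + 1) := by
    simpa only [neg_sub_neg] using sum_Ico_sub (fun i => -f i) (show k / 2 ≤ k + 1 by omega)
  have htop : f (k + 1) = 0 := by
    simp only [f]; rw [Nat.choose_eq_zero_of_lt (by omega), Nat.cast_zero]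
  have hbot : f (k / 2) = (2 * (k + 1) - 1).choose (k + 1) := by
    simp only [f, show 2 * (k + 1) - 1 = 2 * k + 1 by omega]
    obtain ⟨r, hr | hr⟩ := Nat.even_or_odd' k
    · rw [show 2 * (k / 2) + 1 = k + 1 by omega]
    · rw [show 2 * (k / 2) + 1 = k by omega, Nat.choose_symm_half]
  rw [sum_range_succ', sum_congr rfl hterm, ← sum_filter, hfilter, htelescope, htop, hbot,
    ballotNumber, if_neg (by omega), sub_zero, add_zero]

theorem isStandardPart_and_even_iff {n : ℕ} {I : Finset ℕ} :
    (IsStandardPart n I ∧ Even #I ∧ Even #(Icc 1 (2 * n) \ I)) ↔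
      ∃ i < n + 1, I ∈ ballotSets (2 * n) (2 * i) := by
  simp only [mem_ballotSets, isStandardPart_iff]
  constructor
  · rintro ⟨⟨hsub, hball⟩, ⟨i, hi⟩, -⟩
    have := card_le_card hsub
    rw [Nat.card_Icc] at this
    exact ⟨i, by omega, hsub, by omega, hball⟩
  · rintro ⟨i, -, hsub, hcard, hball⟩
    refine ⟨⟨hsub, hball⟩, ⟨i, by omega⟩, n - i, ?_⟩
    rw [card_sdiff_of_subset hsub, Nat.card_Icc]
    omega

/-- The number of standard partitions `(I, Ī)` of `[2n]` with both `|I|` and `|Ī|` even equals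
`C(2n−1, n)`; equivalently, the number of standard Young tableaux with `2n` cells, at most two
rows, and each row of even length is `C(2n−1, n)`. -/
theorem standard_partitions_card (n : ℕ) (hn : 1 ≤ n) :
    {I : Finset ℕ | IsStandardPart n I ∧ Even I.card ∧
        Even (Finset.Icc 1 (2 * n) \ I).card}.ncard = Nat.choose (2 * n - 1) n := by
  have hunion : {I : Finset ℕ | IsStandardPart n I ∧ Even I.card ∧
      Even (Finset.Icc 1 (2 * n) \ I).card} =
        ↑((range (n + 1)).biUnion fun i => ballotSets (2 * n) (2 * i)) := by
    ext I
    simpa only [Set.mem_ofPred_eq, coe_biUnion, mem_coe, mem_range, Set.mem_iUnion, exists_prop]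
      using isStandardPart_and_even_iff
  have hdisjoint :
      (range (n + 1) : Set ℕ).PairwiseDisjoint fun i => ballotSets (2 * n) (2 * i) :=
    fun i _ j _ hij => disjoint_left.2 fun I hi hj =>
      hij (by have := (mem_ballotSets.1 hi).2.1; have := (mem_ballotSets.1 hj).2.1; omega)
  rw [hunion, Set.ncard_coe_finset, card_biUnion hdisjoint, ← Nat.cast_inj (R := ℤ),
    Nat.cast_sum]
  simp only [card_ballotSets]
  exact sum_ballotNumber_two_mul hn
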